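/- arXiv:1704.05706 — 5 statements merged into one kernel-verified Lean document; each statement's English description precedes it below -/
import Mathlib

section
/- Let H = p·F + q·G where F, G, H are CDFs of random variables in [0,1], p, q > 0, p + q = 1. Define F_u* = max((H - q)/p, 0). Then ∫₀¹(1 - F(x))dx ≤ ∫₀¹(1 - F_u*(x))dx = ∫₀¹ min(1 - H(x), p)/p dx. -/
open MeasureTheory intervalIntegral

/-!
Since `q G ≤ q`, the mixture identity gives `(H - q) / p ≤ F`, and `F ≥ 0`, so `F_u* ≤ F` pointwise
and integrating the survival functions `1 - F ≤ 1 - F_u*` gives the inequality. The equality is the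
pointwise identity `1 - max ((h - q) / p) 0 = min (1 - h) p / p`, split according to `h ≥ q`.
-/

lemma max_sub_div_le_of_mixture {p q a b : ℝ} (hp : 0 < p) (hq : 0 ≤ q) (ha : 0 ≤ a)
    (hb : b ≤ 1) : max ((p * a + q * b - q) / p) 0 ≤ a := by
  refine max_le ?_ ha
  rw [div_le_iff₀ hp]
  nlinarith

lemma one_sub_max_sub_div_eq_min_div {p q : ℝ} (hp : 0 < p) (hpq : p + q = 1) (h : ℝ) :
    1 - max ((h - q) / p) 0 = min (1 - h) p / p := by
  rcases le_or_gt q h with hqh | hhq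
  · rw [max_eq_left (div_nonneg (by linarith) hp.le), min_eq_left (by linarith)]
    field_simp
    linarith
  · rw [max_eq_right (div_nonpos_of_nonpos_of_nonneg (by linarith) hp.le),
      min_eq_right (by linarith), div_self hp.ne']
    ring

lemma monotone_max_sub_div {H : ℝ → ℝ} (hH : Monotone H) {p : ℝ} (hp : 0 ≤ p) (q : ℝ) :
    Monotone fun x => max ((H x - q) / p) 0 :=
  (Monotone.div_const (fun _ _ h => sub_le_sub_right (hH h) q) hp).max monotone_const

lemma intervalIntegrable_one_sub_of_monotone {f : ℝ → ℝ} (hf : Monotone f) {μ : Measure ℝ}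
    [IsLocallyFiniteMeasure μ] {a b : ℝ} : IntervalIntegrable (fun x => 1 - f x) μ a b :=
  Antitone.intervalIntegrable fun _ _ h => sub_le_sub_left (hf h) 1

lemma integral_one_sub_le_of_le {f g : ℝ → ℝ} (hf : Monotone f) (hg : Monotone g) {μ : Measure ℝ}
    [IsLocallyFiniteMeasure μ] {a b : ℝ} (hab : a ≤ b) (hgf : ∀ x ∈ Set.Icc a b, g x ≤ f x) :
    ∫ x in a..b, (1 - f x) ∂μ ≤ ∫ x in a..b, (1 - g x) ∂μ :=
  integral_mono_on hab (intervalIntegrable_one_sub_of_monotone hf)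
    (intervalIntegrable_one_sub_of_monotone hg) fun x hx => sub_le_sub_left (hgf x hx) 1

theorem stmt_1_general (F G H : ℝ → ℝ) (p q : ℝ)
    (hp : 0 < p) (hq : 0 < q) (hpq : p + q = 1)
    (hFmono : Monotone F) (hHmono : Monotone H)
    (hFrange : ∀ x, F x ∈ Set.Icc (0:ℝ) 1)
    (hGrange : ∀ x, G x ∈ Set.Icc (0:ℝ) 1)
    (hmix : ∀ x, H x = p * F x + q * G x) :
    (∫ x in (0:ℝ)..1, (1 - F x)) ≤ (∫ x in (0:ℝ)..1, (1 - max ((H x - q) / p) 0)) ∧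
    (∫ x in (0:ℝ)..1, (1 - max ((H x - q) / p) 0)) =
      ∫ x in (0:ℝ)..1, min (1 - H x) p / p := by
  refine ⟨integral_one_sub_le_of_le hFmono (monotone_max_sub_div hHmono hp.le q) zero_le_one
    fun x _ => ?_, integral_congr fun x _ => one_sub_max_sub_div_eq_min_div hp hpq (H x)⟩
  rw [hmix x]
  exact max_sub_div_le_of_mixture hp hq.le (hFrange x).1 (hGrange x).2

/-- Lemma 1, upper bound: if `H = p•F + q•G` is a mixture of CDFs on `[0,1]`,
then `∫₀¹ (1-F) ≤ ∫₀¹ (1 - F_u*) = ∫₀¹ min(1-H, p)/p` for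
`F_u* = max((H-q)/p, 0)`. -/
theorem stmt_1 (F G H : ℝ → ℝ) (p q : ℝ)
    (hp : 0 < p) (hq : 0 < q) (hpq : p + q = 1)
    (hFmono : Monotone F) (hGmono : Monotone G) (hHmono : Monotone H)
    (hFrange : ∀ x, F x ∈ Set.Icc (0:ℝ) 1)
    (hGrange : ∀ x, G x ∈ Set.Icc (0:ℝ) 1)
    (hHrange : ∀ x, H x ∈ Set.Icc (0:ℝ) 1)
    (hmix : ∀ x, H x = p * F x + q * G x) :
    (∫ x in (0:ℝ)..1, (1 - F x)) ≤ (∫ x in (0:ℝ)..1, (1 - max ((H x - q) / p) 0)) ∧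
    (∫ x in (0:ℝ)..1, (1 - max ((H x - q) / p) 0)) =
      ∫ x in (0:ℝ)..1, min (1 - H x) p / p :=
  stmt_1_general F G H p q hp hq hpq hFmono hHmono hFrange hGrange hmix
end

section
/- Let (Ω, P) be a probability space and let S0, S1, A0, A1 be random variables with S0, S1 ∈ {0,1}, and A0, A1 ∈ {0,1} on the event {S0 = 1} and {S1 = 1}, respectively. Assume monotonicity: P(S1 ≥ S0) = 1 and P(A1 ≥ A0 | S1 = S0 = 1) = 1 (meaning A1 ≥ A0 a.s. on the event {S0 = S1 = 1}). Then P(S0 = S1 = 1, A1 > A0) ≤ P(S1 = 1, A1 = 1) - P(S0 = 1, A0 = 1). -/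
/-!
Write `D = {S0 = S1 = 1, A0 < A1}` for the survivor-compliers, `C = {S0 = 1, A0 = 1}` and
`B = {S1 = 1, A1 = 1}`. Binary treatments force `A0 = 0 < 1 = A1` on `D`, so `D` and `C` are almost
surely disjoint, and monotonicity pushes `C` into `B` up to a null set; hence
`P(D) + P(C) ≤ P(B)`.
-/

open MeasureTheory

lemma measureReal_add_le_of_union_ae_le {Ω : Type*} [MeasurableSpace Ω] {μ : Measure Ω}
    [IsFiniteMeasure μ] {s t u : Set Ω} (ht : NullMeasurableSet t μ) (hst : AEDisjoint μ s t)
    (hu : (s ∪ t : Set Ω) ≤ᵐ[μ] u) : μ.real s + μ.real t ≤ μ.real u := by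
  rw [← measureReal_union₀ ht hst]
  exact ENNReal.toReal_mono (measure_ne_top μ u) (measure_mono_ae hu)

lemma binary_eq_zero_and_eq_one_of_lt {a b : ℝ} (ha : a = 0 ∨ a = 1) (hb : b = 0 ∨ b = 1)
    (h : a < b) : a = 0 ∧ b = 1 := by
  rcases ha with rfl | rfl <;> rcases hb with rfl | rfl <;> norm_num at *

lemma binary_eq_one_of_one_le {a : ℝ} (ha : a = 0 ∨ a = 1) (h : 1 ≤ a) : a = 1 :=
  ha.resolve_left (by rintro rfl; norm_num at h)

section PrincipalStrata

variable {Ω : Type*} [MeasurableSpace Ω] {μ : Measure Ω} {S0 S1 A0 A1 : Ω → ℝ}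

lemma aeDisjoint_survivorComplier_treatedAtZero
    (hA0bin : ∀ᵐ ω ∂μ, S0 ω = 1 → (A0 ω = 0 ∨ A0 ω = 1))
    (hA1bin : ∀ᵐ ω ∂μ, S1 ω = 1 → (A1 ω = 0 ∨ A1 ω = 1)) :
    AEDisjoint μ {ω | S0 ω = 1 ∧ S1 ω = 1 ∧ A0 ω < A1 ω} {ω | S0 ω = 1 ∧ A0 ω = 1} := by
  refine measure_eq_zero_iff_ae_notMem.2 ?_
  filter_upwards [hA0bin, hA1bin] with ω hA0 hA1
  rintro ⟨⟨hs0, hs1, hlt⟩, -, ha0⟩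
  have := (binary_eq_zero_and_eq_one_of_lt (hA0 hs0) (hA1 hs1) hlt).1
  linarith

lemma survivorComplier_union_treatedAtZero_ae_le_treatedAtOne
    (hS1bin : ∀ᵐ ω ∂μ, S1 ω = 0 ∨ S1 ω = 1)
    (hA0bin : ∀ᵐ ω ∂μ, S0 ω = 1 → (A0 ω = 0 ∨ A0 ω = 1))
    (hA1bin : ∀ᵐ ω ∂μ, S1 ω = 1 → (A1 ω = 0 ∨ A1 ω = 1))
    (hmonoS : ∀ᵐ ω ∂μ, S0 ω ≤ S1 ω)
    (hmonoA : ∀ᵐ ω ∂μ, (S0 ω = 1 ∧ S1 ω = 1) → A0 ω ≤ A1 ω) :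
    ({ω | S0 ω = 1 ∧ S1 ω = 1 ∧ A0 ω < A1 ω} ∪ {ω | S0 ω = 1 ∧ A0 ω = 1} : Set Ω) ≤ᵐ[μ]
      {ω | S1 ω = 1 ∧ A1 ω = 1} := by
  filter_upwards [hS1bin, hA0bin, hA1bin, hmonoS, hmonoA] with ω hS1 hA0 hA1 hmS hmA
  rintro (⟨hs0, hs1, hlt⟩ | ⟨hs0, ha0⟩)
  · exact ⟨hs1, (binary_eq_zero_and_eq_one_of_lt (hA0 hs0) (hA1 hs1) hlt).2⟩
  · have hs1 : S1 ω = 1 := binary_eq_one_of_one_le hS1 (hs0 ▸ hmS)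
    exact ⟨hs1, binary_eq_one_of_one_le (hA1 hs1) (ha0 ▸ hmA ⟨hs0, hs1⟩)⟩

end PrincipalStrata

theorem stmt_5_general {Ω : Type*} [MeasurableSpace Ω] (μ : Measure Ω) [IsProbabilityMeasure μ]
    (S0 S1 A0 A1 : Ω → ℝ)
    (hS0 : Measurable S0)
    (hA0 : Measurable A0)
    (hS1bin : ∀ᵐ ω ∂μ, S1 ω = 0 ∨ S1 ω = 1)
    (hA0bin : ∀ᵐ ω ∂μ, S0 ω = 1 → (A0 ω = 0 ∨ A0 ω = 1))
    (hA1bin : ∀ᵐ ω ∂μ, S1 ω = 1 → (A1 ω = 0 ∨ A1 ω = 1))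
    (hmonoS : ∀ᵐ ω ∂μ, S0 ω ≤ S1 ω)
    (hmonoA : ∀ᵐ ω ∂μ, (S0 ω = 1 ∧ S1 ω = 1) → A0 ω ≤ A1 ω) :
    (μ {ω | S0 ω = 1 ∧ S1 ω = 1 ∧ A0 ω < A1 ω}).toReal ≤
      (μ {ω | S1 ω = 1 ∧ A1 ω = 1}).toReal - (μ {ω | S0 ω = 1 ∧ A0 ω = 1}).toReal := by
  have hC : MeasurableSet {ω | S0 ω = 1 ∧ A0 ω = 1} :=
    (hS0 (measurableSet_singleton 1)).inter (hA0 (measurableSet_singleton 1))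
  exact le_sub_iff_add_le.2 <| measureReal_add_le_of_union_ae_le hC.nullMeasurableSet
    (aeDisjoint_survivorComplier_treatedAtZero hA0bin hA1bin)
    (survivorComplier_union_treatedAtZero_ae_le_treatedAtOne hS1bin hA0bin hA1bin hmonoS hmonoA)

/-- Upper bound on the survivor-complier proportion (Theorem 1, no covariates):
under selection and treatment monotonicity,
`P(S0 = S1 = 1, A1 > A0) ≤ P(S1 = 1, A1 = 1) - P(S0 = 1, A0 = 1)`. -/
theorem stmt_5 {Ω : Type*} [MeasurableSpace Ω] (μ : Measure Ω) [IsProbabilityMeasure μ]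
    (S0 S1 A0 A1 : Ω → ℝ)
    (hS0 : Measurable S0) (hS1 : Measurable S1)
    (hA0 : Measurable A0) (hA1 : Measurable A1)
    (hS0bin : ∀ᵐ ω ∂μ, S0 ω = 0 ∨ S0 ω = 1)
    (hS1bin : ∀ᵐ ω ∂μ, S1 ω = 0 ∨ S1 ω = 1)
    (hA0bin : ∀ᵐ ω ∂μ, S0 ω = 1 → (A0 ω = 0 ∨ A0 ω = 1))
    (hA1bin : ∀ᵐ ω ∂μ, S1 ω = 1 → (A1 ω = 0 ∨ A1 ω = 1))
    (hmonoS : ∀ᵐ ω ∂μ, S0 ω ≤ S1 ω)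
    (hmonoA : ∀ᵐ ω ∂μ, (S0 ω = 1 ∧ S1 ω = 1) → A0 ω ≤ A1 ω) :
    (μ {ω | S0 ω = 1 ∧ S1 ω = 1 ∧ A0 ω < A1 ω}).toReal ≤
      (μ {ω | S1 ω = 1 ∧ A1 ω = 1}).toReal - (μ {ω | S0 ω = 1 ∧ A0 ω = 1}).toReal :=
  stmt_5_general μ S0 S1 A0 A1 hS0 hA0 hS1bin hA0bin hA1bin hmonoS hmonoA
end

section
/- Let (Ω, P) be a probability space and S0, S1 ∈ {0,1}, with A0 ∈ {0,1} defined on {S0=1} and A1 ∈ {0,1} defined on {S1=1}. Assume S1 ≥ S0 a.s. and A1 ≥ A0 a.s. on {S0 = S1 = 1}. Then P(S0 = S1 = 1, A1 > A0) ≥ P(S0 = 1, A0 = 0) - P(S1 = 1, A1 = 0). -/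
/-! Every unit with `S0 = 1, A0 = 0` survives under treatment too (`S0 ≤ S1`), and then either
`A1 = 0` or `A1 = 1 > A0`. Hence `{S0 = 1, A0 = 0} ⊆ {S1 = 1, A1 = 0} ∪ {S0 = S1 = 1, A0 < A1}`
almost surely, and subadditivity of `μ` gives the bound. -/

open MeasureTheory

theorem measureReal_sub_le_of_ae_le_union {Ω : Type*} [MeasurableSpace Ω] {μ : Measure Ω}
    [IsFiniteMeasure μ] {s t u : Set Ω} (h : s ≤ᵐ[μ] (t ∪ u : Set Ω)) :
    μ.real s - μ.real t ≤ μ.real u := by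
  have hs : μ.real s ≤ μ.real (t ∪ u) := ENNReal.toReal_mono (by finiteness) (measure_mono_ae h)
  linarith [measureReal_union_le (μ := μ) t u]

theorem untreated_survivor_cases {s0 s1 a0 a1 : ℝ} (hs0 : s0 = 1) (ha0 : a0 = 0)
    (hs1bin : s1 = 0 ∨ s1 = 1) (ha1bin : s1 = 1 → a1 = 0 ∨ a1 = 1) (hmono : s0 ≤ s1) :
    (s1 = 1 ∧ a1 = 0) ∨ (s0 = 1 ∧ s1 = 1 ∧ a0 < a1) := by
  have hs1 : s1 = 1 := hs1bin.resolve_left (by linarith)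
  rcases ha1bin hs1 with ha1 | ha1
  · exact Or.inl ⟨hs1, ha1⟩
  · exact Or.inr ⟨hs0, hs1, by linarith⟩

theorem stmt_6_general {Ω : Type*} [MeasurableSpace Ω] (μ : Measure Ω) [IsProbabilityMeasure μ]
    (S0 S1 A0 A1 : Ω → ℝ)
    (hS1bin : ∀ᵐ ω ∂μ, S1 ω = 0 ∨ S1 ω = 1)
    (hA1bin : ∀ᵐ ω ∂μ, S1 ω = 1 → (A1 ω = 0 ∨ A1 ω = 1))
    (hmonoS : ∀ᵐ ω ∂μ, S0 ω ≤ S1 ω) :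
    (μ {ω | S0 ω = 1 ∧ A0 ω = 0}).toReal - (μ {ω | S1 ω = 1 ∧ A1 ω = 0}).toReal ≤
      (μ {ω | S0 ω = 1 ∧ S1 ω = 1 ∧ A0 ω < A1 ω}).toReal := by
  refine measureReal_sub_le_of_ae_le_union ?_
  filter_upwards [hS1bin, hA1bin, hmonoS] with ω hs1bin ha1bin hmono ⟨hs0, ha0⟩
  exact untreated_survivor_cases hs0 ha0 hs1bin ha1bin hmono

/-- Lower bound on the survivor-complier proportion (Theorem 1, no covariates):
under selection and treatment monotonicity,
`P(S0 = S1 = 1, A1 > A0) ≥ P(S0 = 1, A0 = 0) - P(S1 = 1, A1 = 0)`. -/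
theorem stmt_6 {Ω : Type*} [MeasurableSpace Ω] (μ : Measure Ω) [IsProbabilityMeasure μ]
    (S0 S1 A0 A1 : Ω → ℝ)
    (hS0 : Measurable S0) (hS1 : Measurable S1)
    (hA0 : Measurable A0) (hA1 : Measurable A1)
    (hS0bin : ∀ᵐ ω ∂μ, S0 ω = 0 ∨ S0 ω = 1)
    (hS1bin : ∀ᵐ ω ∂μ, S1 ω = 0 ∨ S1 ω = 1)
    (hA0bin : ∀ᵐ ω ∂μ, S0 ω = 1 → (A0 ω = 0 ∨ A0 ω = 1))
    (hA1bin : ∀ᵐ ω ∂μ, S1 ω = 1 → (A1 ω = 0 ∨ A1 ω = 1))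
    (hmonoS : ∀ᵐ ω ∂μ, S0 ω ≤ S1 ω)
    (hmonoA : ∀ᵐ ω ∂μ, (S0 ω = 1 ∧ S1 ω = 1) → A0 ω ≤ A1 ω) :
    (μ {ω | S0 ω = 1 ∧ A0 ω = 0}).toReal - (μ {ω | S1 ω = 1 ∧ A1 ω = 0}).toReal ≤
      (μ {ω | S0 ω = 1 ∧ S1 ω = 1 ∧ A0 ω < A1 ω}).toReal :=
  stmt_6_general μ S0 S1 A0 A1 hS1bin hA1bin hmonoS
end

section
/- Let (Ω, P) be a probability space, X a random variable (covariates), S ∈ {0,1}, Z ∈ {0,1}, Y ∈ [0,1] random variables. Suppose S = g(X) a.s. for a measurable g : 𝒳 → {0,1}. Define λ_z(X) = E[S | X, Z=z] and μ_z(X) = E[SY | X, Z=z]. Then λ_1(X) = λ_0(X) = S a.s., and min(μ_1(X), λ_0(X)) = μ_1(X) a.s., and max(μ_1(X) + λ_0(X) - λ_1(X), 0) = μ_1(X) a.s.; consequently the lower bound E[max(μ_1(X)+λ_0(X)-λ_1(X),0) - μ_0(X)]/E[λ_0(X)] equals the upper bound E[min(μ_1(X),λ_0(X)) - μ_0(X)]/E[λ_0(X)].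 -/
/-!
Since `S = g(X)` is a function of `X`, conditioning on `X` under either `μ[|Z = z]` returns
`g(X)` itself, so `λ_z(X) = g(X)`; and `0 ≤ S Y ≤ S` gives `0 ≤ μ₁(X) ≤ g(X) = λ₀(X)`, which makes
the min and the max collapse to `μ₁(X)`. These identities hold a.s. under `μ[|Z = z]` only; the
positivity of `P(Z = z | X)` is what carries events determined by `X` back to `μ`.
-/

open MeasureTheory ProbabilityTheory

section
variable {Ω : Type*} {m m₀ : MeasurableSpace Ω} {μ : Measure Ω} {s : Set Ω}

lemma measure_eq_zero_of_measure_inter_eq_zero_of_condExp_indicator_pos (hm : m ≤ m₀)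
    [IsFiniteMeasure μ] (hs : MeasurableSet[m₀] s)
    (hpos : ∀ᵐ ω ∂μ, 0 < (μ[s.indicator (fun _ => (1:ℝ)) | m]) ω)
    {B : Set Ω} (hB : MeasurableSet[m] B) (hsB : μ (s ∩ B) = 0) : μ B = 0 := by
  have hint : ∫ ω in B, (μ[s.indicator (fun _ => (1:ℝ)) | m]) ω ∂μ = 0 := by
    rw [setIntegral_condExp hm ((integrable_const 1).indicator hs) hB,
      integral_indicator hs, setIntegral_const, measureReal_restrict_apply hs,
      measureReal_def, hsB]
    simp
  have hposB := ae_restrict_of_ae (s := B) hpos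
  have hzero := (setIntegral_eq_zero_iff_of_nonneg_ae (hposB.mono fun _ h => h.le)
    integrable_condExp.integrableOn).mp hint
  have : ∀ᵐ ω ∂μ.restrict B, False := by
    filter_upwards [hposB, hzero] with ω h h'
    simp [h'] at h
  simpa using this

lemma ae_of_ae_cond_of_condExp_indicator_pos (hm : m ≤ m₀)
    [IsFiniteMeasure μ] (hs : MeasurableSet[m₀] s)
    (hpos : ∀ᵐ ω ∂μ, 0 < (μ[s.indicator (fun _ => (1:ℝ)) | m]) ω)
    {p : Ω → Prop} (hp : MeasurableSet[m] {ω | p ω}) (h : ∀ᵐ ω ∂μ[|s], p ω) :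
    ∀ᵐ ω ∂μ, p ω := by
  refine measure_eq_zero_of_measure_inter_eq_zero_of_condExp_indicator_pos hm hs hpos hp.compl ?_
  rw [ae_iff, cond_apply hs] at h
  exact (mul_eq_zero.mp h).resolve_left (ENNReal.inv_ne_zero.mpr (measure_ne_top μ s))

end

section
variable {Ω : Type*} {m m₀ : MeasurableSpace Ω} {μ : Measure Ω} {f h : Ω → ℝ}

lemma ae_condExp_mem_Icc_of_mem_Icc (hf : AEStronglyMeasurable f μ) (hh : Integrable h μ)
    (hfh : ∀ᵐ ω ∂μ, f ω ∈ Set.Icc 0 (h ω)) :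
    ∀ᵐ ω ∂μ, (μ[f | m]) ω ∈ Set.Icc 0 ((μ[h | m]) ω) := by
  have hfi : Integrable f μ := hh.mono hf <| hfh.mono fun ω hω => by
    rw [Real.norm_of_nonneg hω.1, Real.norm_of_nonneg (hω.1.trans hω.2)]
    exact hω.2
  filter_upwards [condExp_nonneg (hfh.mono fun _ hω => hω.1),
    condExp_mono (m := m) hfi hh (hfh.mono fun _ hω => hω.2)] with ω h0 hle
  exact ⟨h0, hle⟩

end

section
variable {Ω 𝓧 : Type*} [MeasurableSpace Ω] [MeasurableSpace 𝓧] {μ : Measure Ω} [IsFiniteMeasure μ]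
  {X : Ω → 𝓧} {f : Ω → ℝ} {g : 𝓧 → ℝ}

lemma condExp_comap_ae_eq_comp (hX : Measurable X) (hg : Measurable g)
    (hgi : Integrable (g ∘ X) μ) (hfg : f =ᵐ[μ] g ∘ X) :
    μ[f | MeasurableSpace.comap X inferInstance] =ᵐ[μ] g ∘ X :=
  (condExp_congr_ae hfg).trans <| (condExp_of_stronglyMeasurable hX.comap_le
    (hg.comp (comap_measurable X)).stronglyMeasurable hgi).eventuallyEq

lemma ae_condExp_mul_mem_Icc_of_ae_eq_comp {S Y : Ω → ℝ} (hX : Measurable X) (hg : Measurable g)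
    (hg0 : ∀ x, 0 ≤ g x) (hgi : Integrable (g ∘ X) μ) (hSg : S =ᵐ[μ] g ∘ X)
    (hY : AEStronglyMeasurable Y μ) (hY1 : ∀ᵐ ω ∂μ, Y ω ∈ Set.Icc 0 1) :
    ∀ᵐ ω ∂μ, (μ[fun ω => S ω * Y ω | MeasurableSpace.comap X inferInstance]) ω
      ∈ Set.Icc 0 (g (X ω)) := by
  have hS_int : Integrable S μ := hgi.congr hSg.symm
  have hSY : ∀ᵐ ω ∂μ, S ω * Y ω ∈ Set.Icc 0 (S ω) := by
    filter_upwards [hSg, hY1] with ω hSω hYω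
    have hS0 : 0 ≤ S ω := hSω ▸ hg0 (X ω)
    exact ⟨mul_nonneg hS0 hYω.1, mul_le_of_le_one_right hS0 hYω.2⟩
  filter_upwards [condExp_comap_ae_eq_comp hX hg hgi hSg,
    ae_condExp_mem_Icc_of_mem_Icc (hS_int.aestronglyMeasurable.mul hY) hS_int hSY] with ω hSω hω
  rwa [← Function.comp_apply (f := g), ← hSω]

end

theorem stmt_8_general {Ω 𝓧 : Type*} [MeasurableSpace Ω] [MeasurableSpace 𝓧]
    (μ : Measure Ω) [IsProbabilityMeasure μ]
    (X : Ω → 𝓧) (S Z Y : Ω → ℝ) (g : 𝓧 → ℝ)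
    (hX : Measurable X) (hZ : Measurable Z) (hY : Measurable Y)
    (hg : Measurable g)
    (hYrange : ∀ᵐ ω ∂μ, Y ω ∈ Set.Icc (0:ℝ) 1)
    (hSg : ∀ᵐ ω ∂μ, S ω = g (X ω))
    (hgbin : ∀ x, g x = 0 ∨ g x = 1)
    -- P(Z = z | X) > 0 a.s. for z = 0, 1
    (hpos : ∀ z : ℝ, z = 0 ∨ z = 1 → ∀ᵐ ω ∂μ,
      0 < (μ[Set.indicator {ω' | Z ω' = z} (fun _ => (1:ℝ)) |
            MeasurableSpace.comap X inferInstance]) ω)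
    (lam muf : ℝ → 𝓧 → ℝ)
    (hlamMeas : ∀ z, Measurable (lam z)) (hmufMeas : ∀ z, Measurable (muf z))
    (hlam : ∀ z : ℝ, z = 0 ∨ z = 1 →
      (fun ω => lam z (X ω)) =ᵐ[μ[|{ω | Z ω = z}]]
        (μ[|{ω | Z ω = z}])[S | MeasurableSpace.comap X inferInstance])
    (hmuf : ∀ z : ℝ, z = 0 ∨ z = 1 →
      (fun ω => muf z (X ω)) =ᵐ[μ[|{ω | Z ω = z}]]
        (μ[|{ω | Z ω = z}])[fun ω => S ω * Y ω | MeasurableSpace.comap X inferInstance]) :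
    ((fun ω => lam 1 (X ω)) =ᵐ[μ] S) ∧
    ((fun ω => lam 0 (X ω)) =ᵐ[μ] S) ∧
    ((fun ω => min (muf 1 (X ω)) (lam 0 (X ω))) =ᵐ[μ] fun ω => muf 1 (X ω)) ∧
    ((fun ω => max (muf 1 (X ω) + lam 0 (X ω) - lam 1 (X ω)) 0) =ᵐ[μ] fun ω => muf 1 (X ω)) ∧
    ((∫ ω, max (muf 1 (X ω) + lam 0 (X ω) - lam 1 (X ω)) 0 ∂μ - ∫ ω, muf 0 (X ω) ∂μ) /
        ∫ ω, lam 0 (X ω) ∂μ =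
      (∫ ω, min (muf 1 (X ω)) (lam 0 (X ω)) ∂μ - ∫ ω, muf 0 (X ω) ∂μ) /
        ∫ ω, lam 0 (X ω) ∂μ) := by
  have hg_nonneg (x : 𝓧) : 0 ≤ g x := by rcases hgbin x with h | h <;> simp [h]
  have hgX_int (ν : Measure Ω) [IsFiniteMeasure ν] : Integrable (fun ω => g (X ω)) ν :=
    .of_bound (hg.comp hX).aestronglyMeasurable 1 <| .of_forall fun ω => by
      rcases hgbin (X ω) with h | h <;> simp [h]
  have transfer (z : ℝ) (hz : z = 0 ∨ z = 1) {P : 𝓧 → Prop} (hP : MeasurableSet {x | P x})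
      (h : ∀ᵐ ω ∂μ[|{ω | Z ω = z}], P (X ω)) : ∀ᵐ ω ∂μ, P (X ω) :=
    ae_of_ae_cond_of_condExp_indicator_pos hX.comap_le (hZ (measurableSet_singleton z))
      (hpos z hz) (hP.preimage (comap_measurable X)) h
  have hSg_cond (z : ℝ) : S =ᵐ[μ[|{ω | Z ω = z}]] fun ω => g (X ω) :=
    cond_absolutelyContinuous.ae_le hSg
  have hcondExpS (z : ℝ) := condExp_comap_ae_eq_comp hX hg (hgX_int _) (hSg_cond z)
  have hlam_g (z : ℝ) (hz : z = 0 ∨ z = 1) : ∀ᵐ ω ∂μ, lam z (X ω) = g (X ω) :=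
    transfer z hz (measurableSet_eq_fun (hlamMeas z) hg) ((hlam z hz).trans (hcondExpS z))
  have hmuf_mem : ∀ᵐ ω ∂μ, muf 1 (X ω) ∈ Set.Icc 0 (g (X ω)) := by
    refine transfer 1 (Or.inr rfl) (P := fun x => muf 1 x ∈ Set.Icc 0 (g x))
      ((measurableSet_le measurable_const (hmufMeas 1)).inter (measurableSet_le (hmufMeas 1) hg)) ?_
    filter_upwards [hmuf 1 (Or.inr rfl), ae_condExp_mul_mem_Icc_of_ae_eq_comp hX hg hg_nonneg
      (hgX_int _) (hSg_cond 1) hY.aestronglyMeasurable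
      (cond_absolutelyContinuous.ae_le hYrange)] with ω hmufω hω
    rwa [hmufω]
  have hmin : (fun ω => min (muf 1 (X ω)) (lam 0 (X ω))) =ᵐ[μ] fun ω => muf 1 (X ω) := by
    filter_upwards [hlam_g 0 (Or.inl rfl), hmuf_mem] with ω h0 hmem
    rw [h0, min_eq_left hmem.2]
  have hmax : (fun ω => max (muf 1 (X ω) + lam 0 (X ω) - lam 1 (X ω)) 0)
      =ᵐ[μ] fun ω => muf 1 (X ω) := by
    filter_upwards [hlam_g 0 (Or.inl rfl), hlam_g 1 (Or.inr rfl), hmuf_mem] with ω h0 h1 hmem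
    rw [h0, h1, add_sub_cancel_right, max_eq_left hmem.1]
  refine ⟨?_, ?_, hmin, hmax, by rw [integral_congr_ae hmin, integral_congr_ae hmax]⟩
  · filter_upwards [hlam_g 1 (Or.inr rfl), hSg] with ω h hS
    rw [h, hS]
  · filter_upwards [hlam_g 0 (Or.inl rfl), hSg] with ω h hS
    rw [h, hS]

/-- Point identification when covariates perfectly predict selection: if
`S = g(X)` a.s., then `λ₁(X) = λ₀(X) = S` a.s., `min(μ₁(X), λ₀(X)) = μ₁(X)` a.s.,
`max(μ₁(X) + λ₀(X) - λ₁(X), 0) = μ₁(X)` a.s., and the lower and upper bounds on the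
survivor intention-to-treat effect coincide. Here `λ_z ∘ X` and `μ_z ∘ X` are
versions of the conditional expectations of `S` and `S·Y` given `X` under the
conditional measure `μ[|Z = z]`. -/
theorem stmt_8 {Ω 𝓧 : Type*} [MeasurableSpace Ω] [MeasurableSpace 𝓧]
    (μ : Measure Ω) [IsProbabilityMeasure μ]
    (X : Ω → 𝓧) (S Z Y : Ω → ℝ) (g : 𝓧 → ℝ)
    (hX : Measurable X) (hS : Measurable S) (hZ : Measurable Z) (hY : Measurable Y)
    (hg : Measurable g)
    (hZbin : ∀ᵐ ω ∂μ, Z ω = 0 ∨ Z ω = 1)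
    (hYrange : ∀ᵐ ω ∂μ, Y ω ∈ Set.Icc (0:ℝ) 1)
    (hSg : ∀ᵐ ω ∂μ, S ω = g (X ω))
    (hgbin : ∀ x, g x = 0 ∨ g x = 1)
    -- P(Z = z | X) > 0 a.s. for z = 0, 1
    (hpos : ∀ z : ℝ, z = 0 ∨ z = 1 → ∀ᵐ ω ∂μ,
      0 < (μ[Set.indicator {ω' | Z ω' = z} (fun _ => (1:ℝ)) |
            MeasurableSpace.comap X inferInstance]) ω)
    (lam muf : ℝ → 𝓧 → ℝ)
    (hlamMeas : ∀ z, Measurable (lam z)) (hmufMeas : ∀ z, Measurable (muf z))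
    (hlam : ∀ z : ℝ, z = 0 ∨ z = 1 →
      (fun ω => lam z (X ω)) =ᵐ[μ[|{ω | Z ω = z}]]
        (μ[|{ω | Z ω = z}])[S | MeasurableSpace.comap X inferInstance])
    (hmuf : ∀ z : ℝ, z = 0 ∨ z = 1 →
      (fun ω => muf z (X ω)) =ᵐ[μ[|{ω | Z ω = z}]]
        (μ[|{ω | Z ω = z}])[fun ω => S ω * Y ω | MeasurableSpace.comap X inferInstance]) :
    ((fun ω => lam 1 (X ω)) =ᵐ[μ] S) ∧
    ((fun ω => lam 0 (X ω)) =ᵐ[μ] S) ∧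
    ((fun ω => min (muf 1 (X ω)) (lam 0 (X ω))) =ᵐ[μ] fun ω => muf 1 (X ω)) ∧
    ((fun ω => max (muf 1 (X ω) + lam 0 (X ω) - lam 1 (X ω)) 0) =ᵐ[μ] fun ω => muf 1 (X ω)) ∧
    ((∫ ω, max (muf 1 (X ω) + lam 0 (X ω) - lam 1 (X ω)) 0 ∂μ - ∫ ω, muf 0 (X ω) ∂μ) /
        ∫ ω, lam 0 (X ω) ∂μ =
      (∫ ω, min (muf 1 (X ω)) (lam 0 (X ω)) ∂μ - ∫ ω, muf 0 (X ω) ∂μ) /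
        ∫ ω, lam 0 (X ω) ∂μ) :=
  stmt_8_general μ X S Z Y g hX hZ hY hg hYrange hSg hgbin hpos lam muf hlamMeas hmufMeas hlam hmuf
end

section
/- Let δ₁, δ₂ ∈ [0,1], α_ℓ ≤ α_u with α_ℓ > 0, β_ℓ ≤ β_u, and c > 0. Define ψ*(δ₁,δ₂) = c·(δ₂β_u + (1-δ₂)β_ℓ)/(δ₁α_u + (1-δ₁)α_ℓ) and let ψ_ℓ, ψ_u be the bounds ψ_ℓ = c·β_ℓ/((α_u-α_ℓ)𝟙(β_ℓ>0)+α_ℓ) and ψ_u = c·β_u/((α_ℓ-α_u)𝟙(β_u>0)+α_u). Then ψ_ℓ ≤ ψ*(δ₁,δ₂) ≤ ψ_u for all (δ₁,δ₂) ∈ [0,1]². -/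
/-!
The denominator `δ₁ α_u + (1 - δ₁) α_ℓ` is a convex combination, so it lies in `[α_ℓ, α_u]`, and
likewise the numerator lies in `[β_ℓ, β_u]`. For a fixed numerator `b`, the quotient `b / D` over
`D ∈ [α_ℓ, α_u]` is smallest at `D = α_u` when `b > 0` and at `D = α_ℓ` otherwise, and largest at the other endpoint; the indicators
in `ψ_ℓ` and `ψ_u` select exactly these extremal denominators.
-/

open Set

section

variable {K : Type*} [Field K] [LinearOrder K] [IsStrictOrderedRing K]

lemma div_le_div_of_nonpos_left {a b d : K} (hb : b ≤ 0) (ha : 0 < a) (h : a ≤ d) :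
    b / a ≤ b / d := by
  simpa only [neg_div, neg_le_neg_iff] using div_le_div_of_nonneg_left (neg_nonneg.2 hb) ha h

lemma convex_combination_mem_Icc {a b d : K} (hab : a ≤ b) (hd : d ∈ Icc (0 : K) 1) :
    d * b + (1 - d) * a ∈ Icc a b :=
  convex_Icc a b (right_mem_Icc.2 hab) (left_mem_Icc.2 hab) hd.1 (sub_nonneg.2 hd.2) (by ring)

lemma div_ite_le_div_of_mem_Icc {b αl αu D : K} (hαl : 0 < αl) (hD : D ∈ Icc αl αu) :
    b / ((αu - αl) * (if 0 < b then (1 : K) else 0) + αl) ≤ b / D := by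
  split_ifs with hb
  · rw [mul_one, sub_add_cancel]
    exact div_le_div_of_nonneg_left hb.le (hαl.trans_le hD.1) hD.2
  · rw [mul_zero, zero_add]
    exact div_le_div_of_nonpos_left (not_lt.1 hb) hαl hD.1

lemma div_le_div_ite_of_mem_Icc {b αl αu D : K} (hαl : 0 < αl) (hD : D ∈ Icc αl αu) :
    b / D ≤ b / ((αl - αu) * (if 0 < b then (1 : K) else 0) + αu) := by
  split_ifs with hb
  · rw [mul_one, sub_add_cancel]
    exact div_le_div_of_nonneg_left hb.le hαl hD.1
  · rw [mul_zero, zero_add]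
    exact div_le_div_of_nonpos_left (not_lt.1 hb) (hαl.trans_le hD.1) hD.2
end

/-- The sensitivity-analysis interpolation `ψ*(δ₁,δ₂)` always lies between the
Theorem 2 bounds `ψ_ℓ` and `ψ_u`. -/
theorem stmt_12 (d1 d2 αl αu βl βu c : ℝ)
    (hd1 : d1 ∈ Set.Icc (0:ℝ) 1) (hd2 : d2 ∈ Set.Icc (0:ℝ) 1)
    (hαl : 0 < αl) (hα : αl ≤ αu) (hβ : βl ≤ βu) (hc : 0 < c) :
    c * βl / ((αu - αl) * (if 0 < βl then (1:ℝ) else 0) + αl) ≤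
      c * (d2 * βu + (1 - d2) * βl) / (d1 * αu + (1 - d1) * αl) ∧
    c * (d2 * βu + (1 - d2) * βl) / (d1 * αu + (1 - d1) * αl) ≤
      c * βu / ((αl - αu) * (if 0 < βu then (1:ℝ) else 0) + αu) := by
  have hD := convex_combination_mem_Icc hα hd1
  have hN := convex_combination_mem_Icc hβ hd2
  have hDpos : 0 < d1 * αu + (1 - d1) * αl := hαl.trans_le hD.1
  simp only [mul_div_assoc]
  constructor
  · calc c * (βl / _) ≤ c * (βl / (d1 * αu + (1 - d1) * αl)) :=
          mul_le_mul_of_nonneg_left (div_ite_le_div_of_mem_Icc hαl hD) hc.le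
      _ ≤ _ := by gcongr; exact hN.1
  · calc c * (_ / _) ≤ c * (βu / (d1 * αu + (1 - d1) * αl)) := by gcongr; exact hN.2
      _ ≤ _ := mul_le_mul_of_nonneg_left (div_le_div_ite_of_mem_Icc hαl hD) hc.le
end
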